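/- Let T be a Hausdorff tree, α a limit ordinal with κ = cf(α), and suppose H_ξ ⊆ T_α is simple for every ξ < κ. Then the union H = ⋃_{ξ<κ} H_ξ is simple. In particular, a countable union of simple subsets of T_α is simple. -/

import Mathlib

open Set

/-- A partial order is a tree order if the set of strict predecessors of
each element is well-ordered. -/
def IsTreeOrder (T : Type) [PartialOrder T] : Prop :=
  ∀ x : T, IsWellOrder {y : T // y < x} (fun a b => (a : T) < (b : T))

/-- The height of an element of a tree: the order type of its set of strict
predecessors. -/
noncomputable def treeHt {T : Type} [PartialOrder T] (hT : IsTreeOrder T) (x : T) : Ordinal :=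
  @Ordinal.type {y : T // y < x} (fun a b => (a : T) < (b : T)) (hT x)

/-- The level of a tree of order `α`. -/
def treeLevel {T : Type} [PartialOrder T] (hT : IsTreeOrder T) (α : Ordinal) : Set T :=
  {x : T | treeHt hT x = α}

/-- `f` is a cofinal sequence in the limit ordinal `α`: it is a strictly increasing
`cf α`-indexed sequence of ordinals below `α` whose supremum is `α`. -/
def IsCofinalSeq (α : Ordinal) (f : Ordinal → Ordinal) : Prop :=
  (∀ ξ η : Ordinal, ξ < η → η < α.cof.ord → f ξ < f η) ∧
  (∀ ξ : Ordinal, ξ < α.cof.ord → f ξ < α) ∧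
  (∀ β : Ordinal, β < α → ∃ ξ : Ordinal, ξ < α.cof.ord ∧ β ≤ f ξ)

/-- A subset `H` of the level `T_α` (`α` a limit ordinal) is simple if for some
cofinal sequence `(α_ξ)_{ξ < cf α}` in `α` there is an injective regressive map
from `H` into `⋃_{ξ < cf α} T_{α_ξ}`. -/
def TreeSimple {T : Type} [PartialOrder T] (hT : IsTreeOrder T) (α : Ordinal)
    (H : Set T) : Prop :=
  ∃ f : Ordinal → Ordinal, IsCofinalSeq α f ∧
    ∃ π : T → T, Set.InjOn π H ∧
      ∀ x ∈ H, π x < x ∧ ∃ ξ : Ordinal, ξ < α.cof.ord ∧ treeHt hT (π x) = f ξ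

/-- A tree is Hausdorff if every nonempty totally ordered subset has at most one
minimal upper bound. -/
def IsHausdorffTree (T : Type) [PartialOrder T] : Prop :=
  ∀ A : Set T, A.Nonempty → IsChain (· ≤ ·) A → ∀ u v : T,
    u ∈ upperBounds A → (∀ w ∈ upperBounds A, ¬ w < u) →
    v ∈ upperBounds A → (∀ w ∈ upperBounds A, ¬ w < v) → u = v

/-- The interval topology on a tree, generated by the sets `(x, z]` and `(0, z]`. -/
def intervalTopology (T : Type) [PartialOrder T] : TopologicalSpace T :=
  TopologicalSpace.generateFrom
    ({s : Set T | ∃ x z : T, s = Set.Ioc x z} ∪ {s : Set T | ∃ z : T, s = Set.Iic z})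

/-!
Fix an injection `ι × cf α ↪ cf α`, coding a pair `(i, η)` by some `θ < cf α`. There is one
strictly increasing cofinal sequence `B` whose `θ`-th term lies above the `η`-th term of the
sequence witnessing that `H i` is simple. Send `x ∈ H i`, with `π_i x` of height the `η`-th
term, to its predecessor of height `B θ`. The height `B θ` recovers `θ`, hence `i` and `η`; in
a tree the predecessor of height `B θ` determines those below it, in particular `π_i x`, and
`π_i` is injective.
-/

open Cardinal Function Order

namespace Ordinal

theorem add_lt_of_lt_ord_cof {α β θ : Ordinal} (hβ : β < α) (hθ : θ < α.cof.ord) : β + θ < α := by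
  have hsub : α - β ≠ 0 := Ordinal.sub_ne_zero_iff_lt.2 hβ
  rw [← Ordinal.add_sub_cancel_of_le hβ.le] at hθ ⊢
  rw [cof_add _ hsub] at hθ
  exact add_lt_add_right (hθ.trans_le (ord_cof_le _)) β

theorem nonempty_prod_Iio_ord_embedding {c : Cardinal} (hc : ℵ₀ ≤ c) :
    Nonempty (Iio c.ord × Iio c.ord ↪ Iio c.ord) := by
  have : #(Iio c.ord × Iio c.ord) = #(Iio c.ord) := by
    rw [mk_prod, Cardinal.lift_id, Cardinal.mk_Iio_ordinal, card_ord,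
      mul_eq_self (by simpa using hc)]
  exact ⟨(Cardinal.eq.1 this).some.toEmbedding⟩

theorem aleph0_le_cof_of_isSuccLimit {α : Ordinal} (hα : IsSuccLimit α) : ℵ₀ ≤ α.cof :=
  aleph0_le_cof_iff.2 (one_lt_cof_iff.2 hα)

theorem natCast_lt_ord_cof {α : Ordinal} (hα : IsSuccLimit α) (n : ℕ) :
    (n : Ordinal) < α.cof.ord :=
  (natCast_lt_omega0 n).trans_le (omega0_le_ord.2 (aleph0_le_cof_of_isSuccLimit hα))

end Ordinal

theorem IsCofinalSeq.strictMonoOn {α : Ordinal} {B : Ordinal → Ordinal} (hB : IsCofinalSeq α B) :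
    StrictMonoOn B (Iio α.cof.ord) :=
  fun _ _ _ hη h => hB.1 _ _ h hη

theorem exists_isCofinalSeq_ge {α : Ordinal} (hα : IsSuccLimit α) (F : Ordinal → Ordinal)
    (hF : ∀ θ < α.cof.ord, F θ < α) (hFcof : ∀ β < α, ∃ θ < α.cof.ord, β ≤ F θ) :
    ∃ B, IsCofinalSeq α B ∧ ∀ θ < α.cof.ord, F θ ≤ B θ := by
  have hκ : IsSuccLimit α.cof.ord := isSuccLimit_ord (Ordinal.aleph0_le_cof_of_isSuccLimit hα)
  let S : Ordinal → Ordinal := fun θ => ⨆ i : Iio (θ + 1), F i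
  have hbdd : ∀ θ : Ordinal, BddAbove (range fun i : Iio (θ + 1) => F i) :=
    fun _ => Ordinal.bddAbove_of_small
  have hFS : ∀ θ, F θ ≤ S θ := fun θ => le_ciSup (hbdd θ) ⟨θ, lt_add_one θ⟩
  have hSmono : Monotone S := fun θ θ' h =>
    have : Nonempty (Iio (θ + 1)) := ⟨⟨θ, lt_add_one θ⟩⟩
    ciSup_le fun i => le_ciSup (hbdd θ') ⟨i, i.2.trans_le (add_le_add_left h 1)⟩
  have hSlt : ∀ θ < α.cof.ord, S θ < α := by
    intro θ hθ
    refine Ordinal.lift_iSup_lt_of_lt_cof ?_ fun i => hF i (i.2.trans (hκ.add_one_lt hθ))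
    rw [Cardinal.mk_Iio_ordinal, Cardinal.lift_lift, ← Ordinal.lift_cof, Cardinal.lift_lt,
      ← lt_ord]
    exact hκ.add_one_lt hθ
  have hFB : ∀ θ, F θ ≤ S θ + θ := fun θ => (hFS θ).trans le_self_add
  refine ⟨fun θ => S θ + θ, ⟨?_, ?_, ?_⟩, fun θ _ => hFB θ⟩
  · intro θ θ' h _
    exact (add_lt_add_right h (S θ)).trans_le (add_le_add_left (hSmono h.le) θ')
  · exact fun θ hθ => Ordinal.add_lt_of_lt_ord_cof (hSlt θ hθ) hθ
  · intro β hβ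
    obtain ⟨θ, hθ, hβF⟩ := hFcof β hβ
    exact ⟨θ, hθ, hβF.trans (hFB θ)⟩

section TreeOrder

variable {T : Type} [PartialOrder T] (hT : IsTreeOrder T)

theorem treeHt_eq_typein {x y : T} (h : y < x) :
    treeHt hT y =
      @Ordinal.typein {z : T // z < x} (fun a b => (a : T) < (b : T)) (hT x) ⟨y, h⟩ := by
  have := hT x
  have := hT y
  rw [← Ordinal.type_subrel]
  exact Ordinal.type_eq.2 ⟨⟨⟨fun z => ⟨⟨z.1, z.2.trans h⟩, z.2⟩, fun w => ⟨w.1.1, w.2⟩,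
    fun _ => rfl, fun _ => rfl⟩, Iff.rfl⟩⟩

theorem treeHt_lt_treeHt {x y : T} (h : y < x) : treeHt hT y < treeHt hT x := by
  have := hT x
  rw [treeHt_eq_typein hT h]
  exact Ordinal.typein_lt_type _ _

theorem treeHt_lt_treeHt_iff {x y z : T} (hy : y < x) (hz : z < x) :
    treeHt hT y < treeHt hT z ↔ y < z := by
  have := hT x
  rw [treeHt_eq_typein hT hy, treeHt_eq_typein hT hz]
  exact Ordinal.typein_lt_typein _

theorem eq_of_treeHt_eq {x y z : T} (hy : y < x) (hz : z < x)
    (h : treeHt hT y = treeHt hT z) : y = z := by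
  have := hT x
  rw [treeHt_eq_typein hT hy, treeHt_eq_typein hT hz] at h
  exact congrArg Subtype.val (Ordinal.typein_injective _ h)

theorem exists_lt_treeHt_eq {x : T} {β : Ordinal} (hβ : β < treeHt hT x) :
    ∃ y < x, treeHt hT y = β := by
  have := hT x
  obtain ⟨y, hy⟩ := Ordinal.typein_surj (fun a b : {y : T // y < x} => (a : T) < (b : T)) hβ
  exact ⟨y.1, y.2, (treeHt_eq_typein hT y.2).trans hy⟩

open Classical in
/-- `x ↾ β`, the predecessor of `x` of height `β`; junk (`x` itself) unless `β < treeHt hT x`. -/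
noncomputable def treeRestrict (x : T) (β : Ordinal) : T :=
  if h : ∃ y < x, treeHt hT y = β then h.choose else x

variable {hT}

theorem treeRestrict_spec {x : T} {β : Ordinal} (hβ : β < treeHt hT x) :
    treeRestrict hT x β < x ∧ treeHt hT (treeRestrict hT x β) = β := by
  have h := exists_lt_treeHt_eq hT hβ
  rw [treeRestrict, dif_pos h]
  exact h.choose_spec

theorem treeRestrict_treeHt {x y : T} (hy : y < x) : treeRestrict hT x (treeHt hT y) = y :=
  have h := treeRestrict_spec (treeHt_lt_treeHt hT hy)
  eq_of_treeHt_eq hT h.1 hy h.2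

theorem treeRestrict_le_treeRestrict {x : T} {δ δ' : Ordinal} (hδ : δ ≤ δ')
    (hδ' : δ' < treeHt hT x) : treeRestrict hT x δ ≤ treeRestrict hT x δ' := by
  obtain ⟨hlt, hht⟩ := treeRestrict_spec (hδ.trans_lt hδ')
  obtain ⟨hlt', hht'⟩ := treeRestrict_spec hδ'
  rcases hδ.lt_or_eq with h | rfl
  · rw [← hht, ← hht'] at h
    exact ((treeHt_lt_treeHt_iff hT hlt hlt').1 h).le
  · exact le_rfl

theorem treeRestrict_eq_of_le {x y : T} {δ δ' : Ordinal} (hδ : δ ≤ δ') (hx : δ' < treeHt hT x)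
    (hy : δ' < treeHt hT y) (h : treeRestrict hT x δ' = treeRestrict hT y δ') :
    treeRestrict hT x δ = treeRestrict hT y δ := by
  have hlt : treeRestrict hT x δ < y :=
    (treeRestrict_le_treeRestrict hδ hx).trans_lt (h ▸ (treeRestrict_spec hy).1)
  have := treeRestrict_treeHt (hT := hT) hlt
  rw [(treeRestrict_spec (hδ.trans_lt hx)).2] at this
  exact this.symm

end TreeOrder

section Simple

variable {T : Type} [PartialOrder T] {hT : IsTreeOrder T} {α : Ordinal}

theorem treeSimple_of_injOn_restrict {B : Ordinal → Ordinal} (hB : IsCofinalSeq α B)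
    {H : Set T} (hH : H ⊆ treeLevel hT α) (θ : T → Ordinal) (hθ : ∀ x ∈ H, θ x < α.cof.ord)
    (hinj : ∀ x ∈ H, ∀ y ∈ H, θ x = θ y →
      treeRestrict hT x (B (θ x)) = treeRestrict hT y (B (θ x)) → x = y) :
    TreeSimple hT α H := by
  have hlt : ∀ x ∈ H, B (θ x) < treeHt hT x := fun x hx =>
    (hH hx).symm ▸ hB.2.1 _ (hθ x hx)
  refine ⟨B, hB, fun x => treeRestrict hT x (B (θ x)), fun x hx y hy hxy => ?_, fun x hx =>
    ⟨(treeRestrict_spec (hlt x hx)).1, θ x, hθ x hx, (treeRestrict_spec (hlt x hx)).2⟩⟩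
  have hθxy : θ x = θ y := by
    have hht := congrArg (treeHt hT) hxy
    simp only [(treeRestrict_spec (hlt x hx)).2, (treeRestrict_spec (hlt y hy)).2] at hht
    exact hB.strictMonoOn.injOn (hθ x hx) (hθ y hy) hht
  exact hinj x hx y hy hθxy (by simpa only [hθxy] using hxy)

theorem treeSimple_iUnion {ι : Type*} [Nonempty ι] (hα : IsSuccLimit α)
    (e : ι ↪ Iio α.cof.ord) {H : ι → Set T} (hHsub : ∀ i, H i ⊆ treeLevel hT α)
    (hHsimple : ∀ i, TreeSimple hT α (H i)) : TreeSimple hT α (⋃ i, H i) := by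
  choose f hf π hπinj hπ using hHsimple
  have : Nonempty (Iio α.cof.ord) := ⟨e (Classical.arbitrary ι)⟩
  obtain ⟨pair⟩ :=
    Ordinal.nonempty_prod_Iio_ord_embedding (Ordinal.aleph0_le_cof_of_isSuccLimit hα)
  let code : ι × Iio α.cof.ord → Ordinal := fun p => pair (e p.1, p.2)
  have hcode : Injective code := fun p q h =>
    Prod.map_injective.2 ⟨e.injective, injective_id⟩ (pair.injective (Subtype.ext h))
  let F : Ordinal → Ordinal := fun θ => f (invFun code θ).1 (invFun code θ).2
  have hFcode : ∀ p, F (code p) = f p.1 p.2 := fun p => by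
    simp only [F, leftInverse_invFun hcode p]
  obtain ⟨B, hB, hFB⟩ :=
    exists_isCofinalSeq_ge hα F (fun θ _ => (hf _).2.1 _ (invFun code θ).2.2) fun β hβ => by
      let i := Classical.arbitrary ι
      obtain ⟨η, hη, hβη⟩ := (hf i).2.2 β hβ
      exact ⟨code (i, ⟨η, hη⟩), (pair _).2, (hFcode _).symm ▸ hβη⟩
  have hsel : ∀ x ∈ ⋃ i, H i, ∃ p : ι × Iio α.cof.ord,
      x ∈ H p.1 ∧ treeHt hT (π p.1 x) = f p.1 p.2 := by
    intro x hx
    obtain ⟨i, hxi⟩ := mem_iUnion.1 hx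
    obtain ⟨η, hη, hht⟩ := (hπ i x hxi).2
    exact ⟨(i, ⟨η, hη⟩), hxi, hht⟩
  choose! p hp using hsel
  refine treeSimple_of_injOn_restrict hB (iUnion_subset hHsub) (fun x => code (p x))
    (fun x _ => (pair _).2) fun x hx y hy hxy hres => ?_
  obtain ⟨hxH, hxht⟩ := hp x hx
  obtain ⟨hyH, hyht⟩ := hp y hy
  rw [hcode hxy] at hxH hxht hres
  set q := p y
  have hδ : f q.1 q.2 ≤ B (code q) := hFcode q ▸ hFB _ (pair _).2
  have hBlt : ∀ z ∈ H q.1, B (code q) < treeHt hT z := fun z hz =>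
    (hHsub _ hz).symm ▸ hB.2.1 _ (pair _).2
  refine hπinj q.1 hxH hyH ?_
  calc π q.1 x = treeRestrict hT x (f q.1 q.2) := by
        rw [← hxht, treeRestrict_treeHt (hπ _ x hxH).1]
    _ = treeRestrict hT y (f q.1 q.2) :=
        treeRestrict_eq_of_le hδ (hBlt x hxH) (hBlt y hyH) hres
    _ = π q.1 y := by rw [← hyht, treeRestrict_treeHt (hπ _ y hyH).1]

end Simple

theorem stmt_10_general {T : Type} [PartialOrder T] (hT : IsTreeOrder T)
    (α : Ordinal) (hα : Order.IsSuccLimit α)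
    (H : Ordinal → Set T)
    (hHsub : ∀ ξ : Ordinal, ξ < α.cof.ord → H ξ ⊆ treeLevel hT α)
    (hHsimple : ∀ ξ : Ordinal, ξ < α.cof.ord → TreeSimple hT α (H ξ))
    (G : ℕ → Set T)
    (hGsub : ∀ n : ℕ, G n ⊆ treeLevel hT α)
    (hGsimple : ∀ n : ℕ, TreeSimple hT α (G n)) :
    TreeSimple hT α (⋃ ξ ∈ Set.Iio α.cof.ord, H ξ) ∧
      TreeSimple hT α (⋃ n : ℕ, G n) := by
  have : Nonempty (Iio α.cof.ord) := ⟨⟨0, Ordinal.natCast_lt_ord_cof hα 0⟩⟩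
  let natEmb : ℕ ↪ Iio α.cof.ord :=
    ⟨fun n => ⟨n, Ordinal.natCast_lt_ord_cof hα n⟩,
      fun _ _ h => Nat.cast_injective (congrArg Subtype.val h)⟩
  refine ⟨?_, treeSimple_iUnion hα natEmb hGsub hGsimple⟩
  rw [biUnion_eq_iUnion]
  exact treeSimple_iUnion hα (Embedding.refl _) (fun ξ => hHsub ξ ξ.2) fun ξ => hHsimple ξ ξ.2

/-- A union of `cf α`-many simple subsets of `T_α` is simple; in particular, a countable
union of simple subsets of `T_α` is simple. -/
theorem stmt_10 {T : Type} [PartialOrder T] (hT : IsTreeOrder T) (hHaus : IsHausdorffTree T)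
    (α : Ordinal) (hα : Order.IsSuccLimit α)
    (H : Ordinal → Set T)
    (hHsub : ∀ ξ : Ordinal, ξ < α.cof.ord → H ξ ⊆ treeLevel hT α)
    (hHsimple : ∀ ξ : Ordinal, ξ < α.cof.ord → TreeSimple hT α (H ξ))
    (G : ℕ → Set T)
    (hGsub : ∀ n : ℕ, G n ⊆ treeLevel hT α)
    (hGsimple : ∀ n : ℕ, TreeSimple hT α (G n)) :
    TreeSimple hT α (⋃ ξ ∈ Set.Iio α.cof.ord, H ξ) ∧
      TreeSimple hT α (⋃ n : ℕ, G n) :=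
  stmt_10_general hT α hα H hHsub hHsimple G hGsub hGsimple
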